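/- Let z be a nonzero element of the free right-symmetric algebra A = RS⟨x_1,…,x_n⟩ over k. Then the subalgebra of A generated by z is isomorphic to the free right-symmetric algebra RS⟨x⟩ on one generator; equivalently, the unique algebra homomorphism RS⟨x⟩ → A sending x to z is injective. -/

import Mathlib

namespace RS

/-- The degree of a nonassociative word. -/
def deg {X : Type*} : FreeMagma X → ℕ
  | .of _ => 1
  | .mul u v => deg u + deg v

/-- The order on nonassociative words: `u < v` if `d u < d v`; words of equal degree 1 are
compared in `X`; words `u = u₁u₂`, `v = v₁v₂` of equal degree `≥ 2` are compared
lexicographically. -/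
def wlt {X : Type*} [LinearOrder X] : FreeMagma X → FreeMagma X → Prop
  | .of a, .of b => a < b
  | .of _, .mul _ _ => True
  | .mul _ _, .of _ => False
  | .mul u₁ u₂, .mul v₁ v₂ =>
      deg (FreeMagma.mul u₁ u₂) < deg (FreeMagma.mul v₁ v₂) ∨
        (deg (FreeMagma.mul u₁ u₂) = deg (FreeMagma.mul v₁ v₂) ∧
          (wlt u₁ v₁ ∨ (u₁ = v₁ ∧ wlt u₂ v₂)))

/-- `u ≤ v` on nonassociative words. -/
def wle {X : Type*} [LinearOrder X] (u v : FreeMagma X) : Prop := wlt u v ∨ u = v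

/-- A word is good if it contains no subword `(rs)t` with `s > t`. -/
def IsGood {X : Type*} [LinearOrder X] : FreeMagma X → Prop
  | .of _ => True
  | .mul (.of _) v => IsGood v
  | .mul (.mul u₁ u₂) v =>
      IsGood (FreeMagma.mul u₁ u₂) ∧ IsGood v ∧ ¬ wlt v u₂

/-- Evaluation of a nonassociative word at values `x` in a magma `A`. -/
def evalWord {X A : Type*} [Mul A] (x : X → A) : FreeMagma X → A
  | .of a => x a
  | .mul u v => evalWord x u * evalWord x v

/-- Data exhibiting a nonunital nonassociative `k`-algebra `A` as the free right-symmetric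
algebra `RS⟨x_1,…,x_n⟩`: `A` satisfies the right-symmetric identity and the images of the good
words form a `k`-linear basis (Segal's theorem). -/
structure FreeRSData (k : Type*) [Field k] (n : ℕ) (A : Type*)
    [NonUnitalNonAssocRing A] [Module k A] where
  rightSymm : ∀ a b c : A, (a * b) * c - a * (b * c) = (a * c) * b - a * (c * b)
  x : Fin n → A
  basis : Module.Basis {w : FreeMagma (Fin n) // IsGood w} k A
  basis_eq : ∀ w : {w : FreeMagma (Fin n) // IsGood w}, basis w = evalWord x w.1

/-- `w` is the leading word of `f`: it is a good word occurring in the representation of `f`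
in the basis of good words, and every other good word occurring there is smaller. -/
def IsLeadingWord {k : Type*} [Field k] {n : ℕ} {A : Type*} [NonUnitalNonAssocRing A]
    [Module k A] (D : FreeRSData k n A) (f : A) (w : FreeMagma (Fin n)) : Prop :=
  ∃ hw : IsGood w,
    (⟨w, hw⟩ : {u : FreeMagma (Fin n) // IsGood u}) ∈ (D.basis.repr f).support ∧
      ∀ u ∈ (D.basis.repr f).support, u.1 ≠ w → wlt u.1 w

/-- The left-normed word `x R_{w_1} ⋯ R_{w_m} = (…((x w_1) w_2) … w_m)`. -/
def leftNormed {X : Type*} (a : FreeMagma X) (l : List (FreeMagma X)) : FreeMagma X :=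
  l.foldl FreeMagma.mul a

/-- The degree of a word in the variable `a`. -/
def countVar {X : Type*} [DecidableEq X] (a : X) : FreeMagma X → ℕ
  | .of b => if b = a then 1 else 0
  | .mul u v => countVar a u + countVar a v

/-- The two-sided ideal of the nonunital nonassociative `k`-algebra `A` generated by `f`. -/
def idealGen (k : Type*) [Field k] {A : Type*} [NonUnitalNonAssocRing A] [Module k A]
    (f : A) : Submodule k A :=
  sInf {I : Submodule k A | f ∈ I ∧ ∀ a : A, ∀ y ∈ I, a * y ∈ I ∧ y * a ∈ I}

/-- A pair of (nonzero) elements `f, g` is reducible if there is a good word `s` in a single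
variable with `s(f̄) = ḡ` or `s(ḡ) = f̄`. -/
def Reducible {k : Type*} [Field k] {n : ℕ} {A : Type*} [NonUnitalNonAssocRing A]
    [Module k A] (D : FreeRSData k n A) (f g : A) : Prop :=
  ∃ wf wg : FreeMagma (Fin n), IsLeadingWord D f wf ∧ IsLeadingWord D g wg ∧
    ∃ s : FreeMagma Unit, IsGood s ∧
      (evalWord (fun _ => wf) s = wg ∨ evalWord (fun _ => wg) s = wf)

/-- An elementary automorphism: it fixes all generators but one, which is sent to
`α x_i + f` with `α ≠ 0` and `f` in the subalgebra generated by the other generators. -/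
def IsElementary {k : Type*} [Field k] {n : ℕ} {A : Type*} [NonUnitalNonAssocRing A]
    [Module k A] [SMulCommClass k A A] [IsScalarTower k A A]
    (D : FreeRSData k n A) (e : A →ₙₐ[k] A) : Prop :=
  Function.Bijective e ∧ ∃ i : Fin n,
    (∀ j : Fin n, j ≠ i → e (D.x j) = D.x j) ∧
    ∃ (α : k) (f : A), α ≠ 0 ∧
      f ∈ NonUnitalAlgebra.adjoin k (D.x '' {j | j ≠ i}) ∧
      e (D.x i) = α • D.x i + f

/-! The good words form a basis of `A`, and the right-symmetric identity rewrites every word as a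
combination of good words that are not larger in the order `wlt`. Consequently, if `f` and `g`
have leading words `X` and `Y` and `XY` is good, then `fg` has leading word `XY`, with the product
of the leading coefficients. Let `w` be the leading word of `z`. For a good word `s` in one
letter, `s(w)` is again good, so by induction `s(z)` has leading word `s(w)`. Substitution
`s ↦ s(w)` is strictly monotone, so for `y ≠ 0` in `RS⟨x⟩` the image `φ y` has leading word
`s₀(w)`, where `s₀` is the leading word of `y`; in particular `φ y ≠ 0`. -/

section Degree

variable {X : Type*}

@[simp] lemma deg_of (a : X) : deg (FreeMagma.of a) = 1 := rfl

@[simp] lemma deg_mul (u v : FreeMagma X) : deg (u * v) = deg u + deg v := rfl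

lemma deg_pos (u : FreeMagma X) : 0 < deg u := by
  induction u using FreeMagma.recOnMul with
  | ih1 a => simp
  | ih2 u v hu _ => simp only [deg_mul]; omega

lemma deg_evalWord_const {Y : Type*} (w : FreeMagma X) (s : FreeMagma Y) :
    deg (evalWord (fun _ => w) s) = deg s * deg w := by
  induction s using FreeMagma.recOnMul with
  | ih1 a => simp [evalWord]
  | ih2 s₁ s₂ ih₁ ih₂ =>
    change deg (evalWord _ s₁ * evalWord _ s₂) = _
    rw [deg_mul, deg_mul, ih₁, ih₂, add_mul]

lemma finite_setOf_deg_le [Finite X] (d : ℕ) : {v : FreeMagma X | deg v ≤ d}.Finite := by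
  induction d with
  | zero => exact Set.finite_empty.subset fun v hv => (deg_pos v).ne' (Nat.le_zero.mp hv)
  | succ d ih =>
    refine ((Set.finite_range FreeMagma.of).union (ih.image2 (· * ·) ih)).subset ?_
    rintro (a | ⟨v₁, v₂⟩) hv
    · exact Or.inl ⟨a, rfl⟩
    · have := deg_pos v₁
      have := deg_pos v₂
      simp only [Set.mem_ofPred_eq, deg] at hv
      exact Or.inr ⟨v₁, by simp only [Set.mem_ofPred_eq]; omega, v₂,
        by simp only [Set.mem_ofPred_eq]; omega, rfl⟩

end Degree

section WordOrder

variable {X : Type*} [LinearOrder X]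

lemma wlt_of_deg_lt {u v : FreeMagma X} (h : deg u < deg v) : wlt u v := by
  cases u with
  | of a =>
    cases v with
    | of b => simp [deg] at h
    | mul v₁ v₂ => trivial
  | mul u₁ u₂ =>
    cases v with
    | of b => have := deg_pos u₁; have := deg_pos u₂; simp [deg] at h; omega
    | mul v₁ v₂ => exact Or.inl h

lemma deg_le_of_wlt {u v : FreeMagma X} (h : wlt u v) : deg u ≤ deg v := by
  cases u with
  | of a => simpa using Nat.one_le_iff_ne_zero.mpr (deg_pos v).ne'
  | mul u₁ u₂ =>
    cases v with
    | of b => exact h.elim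
    | mul v₁ v₂ => rcases h with h | ⟨h, _⟩ <;> omega

lemma wlt_irrefl (u : FreeMagma X) : ¬ wlt u u := by
  induction u using FreeMagma.recOnMul with
  | ih1 a => exact lt_irrefl a
  | ih2 u₁ u₂ ih₁ ih₂ => rintro (h | ⟨-, h | ⟨-, h⟩⟩) <;> simp_all

lemma wlt_trans {u v w : FreeMagma X} (huv : wlt u v) (hvw : wlt v w) : wlt u w := by
  induction u using FreeMagma.recOnMul generalizing v w with
  | ih1 a =>
    cases v <;> cases w
    exacts [lt_trans huv hvw, trivial, hvw.elim, trivial]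
  | ih2 u₁ u₂ ih₁ ih₂ =>
    cases v with
    | of b => exact huv.elim
    | mul v₁ v₂ =>
      cases w with
      | of c => exact hvw.elim
      | mul w₁ w₂ =>
        rcases huv with h | ⟨hd, h | ⟨rfl, h⟩⟩ <;> rcases hvw with h' | ⟨hd', h' | ⟨rfl, h'⟩⟩
        all_goals first
          | exact Or.inl (by simp only [deg] at *; omega)
          | exact Or.inr ⟨hd.trans hd', Or.inl (ih₁ h h')⟩
          | exact Or.inr ⟨hd.trans hd', Or.inl h⟩
          | exact Or.inr ⟨hd.trans hd', Or.inl h'⟩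
          | exact Or.inr ⟨hd.trans hd', Or.inr ⟨rfl, ih₂ h h'⟩⟩

lemma wlt_trichotomous (u v : FreeMagma X) : wlt u v ∨ u = v ∨ wlt v u := by
  induction u using FreeMagma.recOnMul generalizing v with
  | ih1 a =>
    cases v with
    | of b => rcases lt_trichotomy a b with h | rfl | h <;> simp_all [wlt]
    | mul v₁ v₂ => exact Or.inl trivial
  | ih2 u₁ u₂ ih₁ ih₂ =>
    cases v with
    | of b => exact Or.inr (Or.inr trivial)
    | mul v₁ v₂ =>
      rcases lt_trichotomy (deg (u₁ * u₂)) (deg (v₁ * v₂)) with hd | hd | hd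
      · exact Or.inl (Or.inl hd)
      · rcases ih₁ v₁ with h | rfl | h
        · exact Or.inl (Or.inr ⟨hd, Or.inl h⟩)
        · rcases ih₂ v₂ with h' | rfl | h'
          · exact Or.inl (Or.inr ⟨hd, Or.inr ⟨rfl, h'⟩⟩)
          · exact Or.inr (Or.inl rfl)
          · exact Or.inr (Or.inr (Or.inr ⟨hd.symm, Or.inr ⟨rfl, h'⟩⟩))
        · exact Or.inr (Or.inr (Or.inr ⟨hd.symm, Or.inl h⟩))
      · exact Or.inr (Or.inr (Or.inl hd))

instance : IsStrictTotalOrder (FreeMagma X) wlt where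
  trichotomous u v h₁ h₂ := ((wlt_trichotomous u v).resolve_left h₁).resolve_right h₂
  irrefl := wlt_irrefl
  trans _ _ _ := wlt_trans

noncomputable abbrev wordOrder : LinearOrder (FreeMagma X) := by
  classical exact linearOrderOfSTO wlt

end WordOrder

attribute [local instance] wordOrder

section OrderedWords

variable {X : Type*} [LinearOrder X]

lemma lt_of_deg_lt {u v : FreeMagma X} (h : deg u < deg v) : u < v := wlt_of_deg_lt h

lemma deg_le_of_le {u v : FreeMagma X} (h : u ≤ v) : deg u ≤ deg v := by
  rcases h with rfl | h
  exacts [le_rfl, deg_le_of_wlt h]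

lemma mul_lt_mul_of_deg_eq {u₁ u₂ v₁ v₂ : FreeMagma X} (hd : deg (u₁ * u₂) = deg (v₁ * v₂))
    (h : u₁ < v₁) : u₁ * u₂ < v₁ * v₂ :=
  Or.inr ⟨hd, Or.inl h⟩

protected lemma mul_lt_mul_left {u v₁ v₂ : FreeMagma X} (h : v₁ < v₂) : u * v₁ < u * v₂ := by
  rcases (deg_le_of_wlt h).lt_or_eq with hd | hd
  · exact lt_of_deg_lt (by simpa using hd)
  · exact Or.inr ⟨by simp [hd], Or.inr ⟨rfl, h⟩⟩

protected lemma mul_lt_mul_of_lt_of_le {u₁ u₂ v₁ v₂ : FreeMagma X} (h₁ : u₁ < v₁)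
    (h₂ : u₂ ≤ v₂) : u₁ * u₂ < v₁ * v₂ := by
  have := deg_le_of_wlt h₁
  have := deg_le_of_le h₂
  rcases (show deg (u₁ * u₂) ≤ deg (v₁ * v₂) by simp; omega).lt_or_eq with hd | hd
  exacts [lt_of_deg_lt hd, mul_lt_mul_of_deg_eq hd h₁]

protected lemma mul_lt_mul_of_le_of_lt {u₁ u₂ v₁ v₂ : FreeMagma X} (h₁ : u₁ ≤ v₁)
    (h₂ : u₂ < v₂) : u₁ * u₂ < v₁ * v₂ := by
  rcases h₁ with rfl | h₁
  exacts [RS.mul_lt_mul_left h₂, RS.mul_lt_mul_of_lt_of_le h₁ h₂.le]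

protected lemma mul_le_mul {u₁ u₂ v₁ v₂ : FreeMagma X} (h₁ : u₁ ≤ v₁) (h₂ : u₂ ≤ v₂) :
    u₁ * u₂ ≤ v₁ * v₂ := by
  rcases h₁.lt_or_eq with h₁ | rfl
  · exact (RS.mul_lt_mul_of_lt_of_le h₁ h₂).le
  · rcases h₂.lt_or_eq with h₂ | rfl
    exacts [(RS.mul_lt_mul_left h₂).le, le_rfl]

/-- Below a given word there are only words of smaller or equal degree, and finitely many of
those. -/
instance [Finite X] : WellFoundedLT (FreeMagma X) :=
  ⟨⟨fun a => ((Set.WellFoundedOn.acc_iff_wellFoundedOn).out 0 2).mpr <|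
    ((finite_setOf_deg_le (deg a)).subset fun b hb => by
      rw [Set.mem_ofPred_eq, Relation.transGen_eq_self] at hb
      exact deg_le_of_wlt hb).wellFoundedOn⟩⟩

lemma rightSymm_rewrite_lt {u₁ u₂ t : FreeMagma X} (h : t < u₂) :
    u₁ * (u₂ * t) < u₁ * u₂ * t ∧ u₁ * t * u₂ < u₁ * u₂ * t ∧ u₁ * (t * u₂) < u₁ * u₂ * t := by
  have hu₁ : u₁ < u₁ * u₂ := lt_of_deg_lt (by simp [deg_pos])
  refine ⟨mul_lt_mul_of_deg_eq ?_ hu₁, mul_lt_mul_of_deg_eq ?_ (RS.mul_lt_mul_left h),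
    mul_lt_mul_of_deg_eq ?_ hu₁⟩ <;> simp only [deg_mul] <;> omega

variable {Y : Type*} [LinearOrder Y] [Subsingleton Y]

lemma strictMono_evalWord_const (w : FreeMagma X) :
    StrictMono (evalWord (fun _ : Y => w)) := by
  have hw := deg_pos w
  intro s t h
  induction s using FreeMagma.recOnMul generalizing t with
  | ih1 a =>
    cases t with
    | of b => exact absurd h (Subsingleton.elim a b ▸ lt_irrefl a)
    | mul t₁ t₂ =>
      refine lt_of_deg_lt ?_
      rw [deg_evalWord_const, deg_evalWord_const]
      have := deg_pos t₁
      have := deg_pos t₂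
      exact Nat.mul_lt_mul_of_lt_of_le (by simp only [deg]; omega) le_rfl hw
  | ih2 s₁ s₂ ih₁ ih₂ =>
    cases t with
    | of b => exact h.elim
    | mul t₁ t₂ =>
      rcases h with hd | ⟨hd, h | ⟨rfl, h⟩⟩
      · refine lt_of_deg_lt ?_
        rw [deg_evalWord_const, deg_evalWord_const]
        exact Nat.mul_lt_mul_of_lt_of_le hd le_rfl hw
      · refine mul_lt_mul_of_deg_eq ?_ (ih₁ h)
        change deg (evalWord _ (s₁ * s₂)) = deg (evalWord _ (t₁ * t₂))
        rw [deg_evalWord_const, deg_evalWord_const]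
        exact congrArg (· * deg w) hd
      · exact RS.mul_lt_mul_left (ih₂ h)

lemma IsGood.left {u v : FreeMagma X} (h : IsGood (u * v)) : IsGood u := by
  cases u
  exacts [trivial, h.1]

lemma IsGood.right {u v : FreeMagma X} (h : IsGood (u * v)) : IsGood v := by
  cases u
  exacts [h, h.2.1]

lemma IsGood.mul {u v : FreeMagma X} (hu : IsGood u) (hv : IsGood v)
    (h : ∀ u₁ u₂, u = u₁ * u₂ → ¬ v < u₂) : IsGood (u * v) := by
  cases u
  exacts [hv, ⟨hu, hv, h _ _ rfl⟩]

lemma IsGood.evalWord_const {w : FreeMagma X} {s : FreeMagma Y} (hw : IsGood w) (hs : IsGood s) :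
    IsGood (evalWord (fun _ => w) s) := by
  induction s using FreeMagma.recOnMul with
  | ih1 a => exact hw
  | ih2 s₁ s₂ ih₁ ih₂ =>
    refine (ih₁ hs.left).mul (ih₂ hs.right) fun u₁ u₂ hu => ?_
    cases s₁ with
    | of c =>
      have hu : w = u₁ * u₂ := hu
      refine not_lt_of_gt (lt_of_deg_lt ?_)
      have := deg_pos u₁
      have := deg_pos s₂
      rw [deg_evalWord_const, hu, deg_mul]
      nlinarith
    | mul t₁ t₂ =>
      injection hu with _ hu₂
      subst hu₂
      exact (strictMono_evalWord_const w).lt_iff_lt.not.mpr hs.2.2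

end OrderedWords

lemma mul_mem_of_mem_span {R B : Type*} [CommSemiring R] [NonUnitalNonAssocSemiring B]
    [Module R B] [SMulCommClass R B B] [IsScalarTower R B B] {s t : Set B} {S : Submodule R B}
    (H : ∀ a ∈ s, ∀ b ∈ t, a * b ∈ S) {f g : B} (hf : f ∈ Submodule.span R s)
    (hg : g ∈ Submodule.span R t) : f * g ∈ S := by
  have := Submodule.apply_mem_map₂ (LinearMap.mul R B) hf hg
  rw [Submodule.map₂_span_span] at this
  exact Submodule.span_le.mpr (Set.image2_subset_iff.mpr H) this

lemma map_evalWord {X B C F : Type*} [Mul B] [Mul C] [FunLike F B C] [MulHomClass F B C]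
    (ψ : F) (x : X → B) (t : FreeMagma X) : ψ (evalWord x t) = evalWord (fun i => ψ (x i)) t := by
  induction t using FreeMagma.recOnMul with
  | ih1 a => rfl
  | ih2 u v hu hv => exact (map_mul ψ _ _).trans (congrArg₂ (· * ·) hu hv)

lemma FreeRSData.mul_mul {k : Type*} [Field k] {n : ℕ} {A : Type*} [NonUnitalNonAssocRing A]
    [Module k A] (D : FreeRSData k n A) (a b c : A) :
    a * b * c = a * (b * c) + (a * c * b - a * (c * b)) :=
  sub_eq_iff_eq_add'.mp (D.rightSymm a b c)

section Span

variable {k : Type*} [Field k] {n : ℕ} {A : Type*} [NonUnitalNonAssocRing A] [Module k A]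
  (D : FreeRSData k n A)

def SpanLe (X : FreeMagma (Fin n)) : Submodule k A :=
  Submodule.span k (D.basis '' {p | p.1 ≤ X})

def SpanLt (X : FreeMagma (Fin n)) : Submodule k A :=
  Submodule.span k (D.basis '' {p | p.1 < X})

variable {D} {X Y : FreeMagma (Fin n)} {f g : A}

lemma mem_spanLe_iff : f ∈ SpanLe D X ↔ ∀ p ∈ (D.basis.repr f).support, p.1 ≤ X :=
  D.basis.mem_span_image

lemma mem_spanLt_iff : f ∈ SpanLt D X ↔ ∀ p ∈ (D.basis.repr f).support, p.1 < X :=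
  D.basis.mem_span_image

lemma basis_mem_spanLe {p : {w : FreeMagma (Fin n) // IsGood w}} (h : p.1 ≤ X) :
    D.basis p ∈ SpanLe D X :=
  Submodule.subset_span ⟨p, h, rfl⟩

lemma spanLe_mono (h : X ≤ Y) : SpanLe D X ≤ SpanLe D Y :=
  Submodule.span_mono (Set.image_mono fun _ hp => le_trans hp h)

lemma spanLe_le_spanLt (h : X < Y) : SpanLe D X ≤ SpanLt D Y :=
  Submodule.span_mono (Set.image_mono fun _ hp => lt_of_le_of_lt hp h)

lemma spanLt_le_spanLe : SpanLt D X ≤ SpanLe D X :=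
  Submodule.span_mono (Set.image_mono fun p (hp : p.1 < X) => hp.le)

lemma repr_eq_zero_of_mem_spanLt (hX : IsGood X) (hf : f ∈ SpanLt D X) :
    D.basis.repr f ⟨X, hX⟩ = 0 :=
  Finsupp.notMem_support_iff.mp fun h => lt_irrefl X (mem_spanLt_iff.mp hf _ h)

lemma sub_smul_basis_mem_spanLt (hX : IsGood X) (hf : f ∈ SpanLe D X) :
    f - D.basis.repr f ⟨X, hX⟩ • D.basis ⟨X, hX⟩ ∈ SpanLt D X := by
  refine mem_spanLt_iff.mpr fun p hp => ?_
  rw [Finsupp.mem_support_iff, map_sub, map_smul, D.basis.repr_self, Finsupp.sub_apply,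
    Finsupp.smul_apply] at hp
  rcases eq_or_ne p ⟨X, hX⟩ with rfl | hpX
  · simp at hp
  · rw [Finsupp.single_eq_of_ne hpX, smul_zero, sub_zero, ← Finsupp.mem_support_iff] at hp
    exact (mem_spanLe_iff.mp hf p hp).lt_of_ne fun h => hpX (Subtype.ext h)

lemma isLeadingWord_iff {w : FreeMagma (Fin n)} :
    IsLeadingWord D f w ↔ ∃ hw : IsGood w, D.basis.repr f ⟨w, hw⟩ ≠ 0 ∧ f ∈ SpanLe D w := by
  simp only [IsLeadingWord, mem_spanLe_iff, Finsupp.mem_support_iff]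
  refine exists_congr fun hw => and_congr_right fun _ => forall_congr' fun p => ?_
  refine imp_congr_right fun _ => ⟨fun h => ?_, fun h hne => h.lt_of_ne hne⟩
  rcases eq_or_ne p.1 w with hp | hp
  exacts [hp.le, le_of_lt (h hp)]

lemma exists_isLeadingWord {m : ℕ} {B : Type*} [NonUnitalNonAssocRing B] [Module k B]
    (E : FreeRSData k m B) {f : B} (hf : f ≠ 0) : ∃ w, IsLeadingWord E f w := by
  obtain ⟨p, hp, hmax⟩ := (E.basis.repr f).support.exists_max_image Subtype.val
    (Finsupp.support_nonempty_iff.mpr (E.basis.repr.map_ne_zero_iff.mpr hf))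
  exact ⟨p.1, p.2, hp, fun q hq hne => (hmax q hq).lt_of_ne hne⟩

namespace IsLeadingWord

variable {w : FreeMagma (Fin n)}

lemma isGood (h : IsLeadingWord D f w) : IsGood w := h.1

lemma mem_spanLe (h : IsLeadingWord D f w) : f ∈ SpanLe D w := (isLeadingWord_iff.mp h).2.2

lemma ne_zero (h : IsLeadingWord D f w) : f ≠ 0 := by
  rintro rfl
  simpa using h.2.1

lemma smul (h : IsLeadingWord D f w) {c : k} (hc : c ≠ 0) : IsLeadingWord D (c • f) w := by
  obtain ⟨hw, hf, hmem⟩ := isLeadingWord_iff.mp h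
  exact isLeadingWord_iff.mpr ⟨hw, by simpa [hc] using hf, Submodule.smul_mem _ c hmem⟩

lemma add_of_mem_spanLt (h : IsLeadingWord D f w) (hg : g ∈ SpanLt D w) :
    IsLeadingWord D (f + g) w := by
  obtain ⟨hw, hf, hmem⟩ := isLeadingWord_iff.mp h
  refine isLeadingWord_iff.mpr ⟨hw, ?_, add_mem hmem (spanLt_le_spanLe hg)⟩
  rwa [map_add, Finsupp.add_apply, repr_eq_zero_of_mem_spanLt hw hg, add_zero]

end IsLeadingWord

end Span

section Products

variable {k : Type*} [Field k] {n : ℕ} {A : Type*} [NonUnitalNonAssocRing A] [Module k A]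
  [SMulCommClass k A A] [IsScalarTower k A A] (D : FreeRSData k n A)

/-- Reduction to good words: the right-symmetric identity rewrites `(u₁u₂)t` with `t < u₂` into
smaller words, and a product with a bad factor reduces factorwise. -/
theorem evalWord_mem_spanLe (t : FreeMagma (Fin n)) : evalWord D.x t ∈ SpanLe D t := by
  induction t using WellFoundedLT.induction with
  | _ t ih =>
  by_cases ht : IsGood t
  · rw [← D.basis_eq ⟨t, ht⟩]
    exact basis_mem_spanLe le_rfl
  obtain ⟨t₁, t₂, rfl⟩ : ∃ t₁ t₂, t = t₁ * t₂ := by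
    cases t
    exacts [(ht trivial).elim, ⟨_, _, rfl⟩]
  have mem_of_lt : ∀ v < t₁ * t₂, evalWord D.x v ∈ SpanLe D (t₁ * t₂) :=
    fun v hv => spanLe_mono hv.le (ih v hv)
  by_cases hgood : IsGood t₁ ∧ IsGood t₂
  · obtain ⟨u₁, u₂, rfl, hlt⟩ : ∃ u₁ u₂, t₁ = u₁ * u₂ ∧ t₂ < u₂ := by
      cases t₁ with
      | of => exact (ht hgood.2).elim
      | mul u₁ u₂ =>
        exact ⟨u₁, u₂, rfl, lt_of_not_ge fun h => ht ⟨hgood.1, hgood.2, not_lt_of_ge h⟩⟩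
    obtain ⟨h₁, h₂, h₃⟩ := rightSymm_rewrite_lt (u₁ := u₁) hlt
    change evalWord D.x u₁ * evalWord D.x u₂ * evalWord D.x t₂ ∈ _
    rw [D.mul_mul]
    exact add_mem (mem_of_lt _ h₁) (sub_mem (mem_of_lt _ h₂) (mem_of_lt _ h₃))
  · have h₁ : t₁ < t₁ * t₂ := lt_of_deg_lt (by simp [deg_pos])
    have h₂ : t₂ < t₁ * t₂ := lt_of_deg_lt (by simp [deg_pos])
    refine mul_mem_of_mem_span ?_ (ih t₁ h₁) (ih t₂ h₂)
    rintro _ ⟨p, hp, rfl⟩ _ ⟨q, hq, rfl⟩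
    rw [D.basis_eq, D.basis_eq]
    refine mem_of_lt (p.1 * q.1) ?_
    rcases not_and_or.mp hgood with h | h
    · exact RS.mul_lt_mul_of_lt_of_le (hp.lt_of_ne fun e => h (e ▸ p.2)) hq
    · exact RS.mul_lt_mul_of_le_of_lt hp (hq.lt_of_ne fun e => h (e ▸ q.2))

variable {D} {X Y : FreeMagma (Fin n)} {f g : A}

lemma basis_mul_basis_mem_spanLe (p q : {w : FreeMagma (Fin n) // IsGood w}) :
    D.basis p * D.basis q ∈ SpanLe D (p.1 * q.1) := by
  rw [D.basis_eq, D.basis_eq]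
  exact evalWord_mem_spanLe D _

lemma mul_mem_spanLe (hf : f ∈ SpanLe D X) (hg : g ∈ SpanLe D Y) : f * g ∈ SpanLe D (X * Y) := by
  refine mul_mem_of_mem_span ?_ hf hg
  rintro _ ⟨p, hp, rfl⟩ _ ⟨q, hq, rfl⟩
  exact spanLe_mono (RS.mul_le_mul hp hq) (basis_mul_basis_mem_spanLe p q)

lemma mul_mem_spanLt_of_left (hf : f ∈ SpanLt D X) (hg : g ∈ SpanLe D Y) :
    f * g ∈ SpanLt D (X * Y) := by
  refine mul_mem_of_mem_span ?_ hf hg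
  rintro _ ⟨p, hp, rfl⟩ _ ⟨q, hq, rfl⟩
  exact spanLe_le_spanLt (RS.mul_lt_mul_of_lt_of_le hp hq) (basis_mul_basis_mem_spanLe p q)

lemma mul_mem_spanLt_of_right (hf : f ∈ SpanLe D X) (hg : g ∈ SpanLt D Y) :
    f * g ∈ SpanLt D (X * Y) := by
  refine mul_mem_of_mem_span ?_ hf hg
  rintro _ ⟨p, hp, rfl⟩ _ ⟨q, hq, rfl⟩
  exact spanLe_le_spanLt (RS.mul_lt_mul_of_le_of_lt hp hq) (basis_mul_basis_mem_spanLe p q)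

lemma repr_mul_apply (hX : IsGood X) (hY : IsGood Y) (hXY : IsGood (X * Y))
    (hf : f ∈ SpanLe D X) (hg : g ∈ SpanLe D Y) :
    D.basis.repr (f * g) ⟨X * Y, hXY⟩ = D.basis.repr f ⟨X, hX⟩ * D.basis.repr g ⟨Y, hY⟩ := by
  set c := D.basis.repr f ⟨X, hX⟩
  set e := D.basis.repr g ⟨Y, hY⟩
  have hbX : D.basis ⟨X, hX⟩ ∈ SpanLe D X := basis_mem_spanLe le_rfl
  have hb : D.basis ⟨X, hX⟩ * D.basis ⟨Y, hY⟩ = D.basis ⟨X * Y, hXY⟩ := by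
    rw [D.basis_eq, D.basis_eq, D.basis_eq]
    rfl
  have hfg : f * g = (f - c • D.basis ⟨X, hX⟩) * g
      + (c • D.basis ⟨X, hX⟩ * (g - e • D.basis ⟨Y, hY⟩) + (c * e) • D.basis ⟨X * Y, hXY⟩) := by
    rw [← hb, mul_sub, smul_mul_smul_comm, sub_mul]
    abel
  rw [hfg, map_add, map_add, Finsupp.add_apply, Finsupp.add_apply,
    repr_eq_zero_of_mem_spanLt hXY (mul_mem_spanLt_of_left (sub_smul_basis_mem_spanLt hX hf) hg),
    repr_eq_zero_of_mem_spanLt hXY (mul_mem_spanLt_of_right (Submodule.smul_mem _ c hbX)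
      (sub_smul_basis_mem_spanLt hY hg)), map_smul, D.basis.repr_self]
  simp

namespace IsLeadingWord

variable {w : FreeMagma (Fin n)}

lemma mul (hf : IsLeadingWord D f X) (hg : IsLeadingWord D g Y) (hXY : IsGood (X * Y)) :
    IsLeadingWord D (f * g) (X * Y) := by
  obtain ⟨hX, hfX, hf⟩ := isLeadingWord_iff.mp hf
  obtain ⟨hY, hgY, hg⟩ := isLeadingWord_iff.mp hg
  exact isLeadingWord_iff.mpr
    ⟨hXY, by simpa [repr_mul_apply hX hY hXY hf hg] using ⟨hfX, hgY⟩, mul_mem_spanLe hf hg⟩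

lemma evalWord_const {Y : Type*} [LinearOrder Y] [Subsingleton Y] {z : A}
    (hz : IsLeadingWord D z w) {s : FreeMagma Y} (hs : IsGood s) :
    IsLeadingWord D (evalWord (fun _ => z) s) (evalWord (fun _ => w) s) := by
  induction s using FreeMagma.recOnMul with
  | ih1 a => exact hz
  | ih2 s₁ s₂ ih₁ ih₂ => exact (ih₁ hs.left).mul (ih₂ hs.right) (hz.isGood.evalWord_const hs)

end IsLeadingWord

theorem isLeadingWord_map {A₁ : Type*} [NonUnitalNonAssocRing A₁] [Module k A₁]
    (D₁ : FreeRSData k 1 A₁) (φ : A₁ →ₙₐ[k] A) {w : FreeMagma (Fin n)}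
    (hz : IsLeadingWord D (φ (D₁.x 0)) w) {y : A₁} {s : FreeMagma (Fin 1)}
    (hy : IsLeadingWord D₁ y s) : IsLeadingWord D (φ y) (evalWord (fun _ => w) s) := by
  have map_basis : ∀ p, φ (D₁.basis p) = evalWord (fun _ => φ (D₁.x 0)) p.1 := fun p => by
    rw [D₁.basis_eq, map_evalWord]
    exact congrArg (evalWord · p.1) (funext fun i => by rw [Subsingleton.elim i 0])
  obtain ⟨hs, hys, hmax⟩ := hy
  rw [← D₁.basis.linearCombination_repr y, Finsupp.linearCombination_apply, Finsupp.sum,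
    ← Finset.add_sum_erase _ _ hys, map_add, map_sum, map_smul, map_basis]
  refine ((hz.evalWord_const hs).smul (Finsupp.mem_support_iff.mp hys)).add_of_mem_spanLt
    (Submodule.sum_mem _ fun p hp => ?_)
  obtain ⟨hne, hp⟩ := Finset.mem_erase.mp hp
  rw [map_smul, map_basis]
  exact Submodule.smul_mem _ _ (spanLe_le_spanLt
    (strictMono_evalWord_const w (hmax p hp fun h => hne (Subtype.ext h)))
    (hz.evalWord_const p.2).mem_spanLe)

end Products

theorem statement14_general (k : Type*) [Field k] (n : ℕ) (A A₁ : Type*)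
    [NonUnitalNonAssocRing A] [Module k A] [SMulCommClass k A A] [IsScalarTower k A A]
    [NonUnitalNonAssocRing A₁] [Module k A₁]
    (D : FreeRSData k n A) (D₁ : FreeRSData k 1 A₁)
    (z : A) (hz : z ≠ 0)
    (φ : A₁ →ₙₐ[k] A) (hφ : φ (D₁.x 0) = z) :
    Function.Injective φ := by
  refine (injective_iff_map_eq_zero φ).mpr fun y hy => by_contra fun hy₀ => ?_
  obtain ⟨w, hw⟩ := exists_isLeadingWord D hz
  obtain ⟨s, hs⟩ := exists_isLeadingWord D₁ hy₀
  exact (isLeadingWord_map D₁ φ (hφ ▸ hw) hs).ne_zero hy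

/-- Lemma 4.1: for any nonzero element `z` of the free right-symmetric
algebra `A`, the algebra homomorphism from the free right-symmetric algebra `RS⟨x⟩` on one
generator sending `x` to `z` is injective, i.e. the subalgebra generated by `z` is isomorphic
to `RS⟨x⟩`. -/
theorem statement14 (k : Type*) [Field k] (n : ℕ) (A A₁ : Type*)
    [NonUnitalNonAssocRing A] [Module k A] [SMulCommClass k A A] [IsScalarTower k A A]
    [NonUnitalNonAssocRing A₁] [Module k A₁] [SMulCommClass k A₁ A₁] [IsScalarTower k A₁ A₁]
    (D : FreeRSData k n A) (D₁ : FreeRSData k 1 A₁)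
    (z : A) (hz : z ≠ 0)
    (φ : A₁ →ₙₐ[k] A) (hφ : φ (D₁.x 0) = z) :
    Function.Injective φ :=
  statement14_general k n A A₁ D D₁ z hz φ hφ

end RS
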